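/- (Pretty-good estimate) For any POVM {P_x}_{x∈X} on a d-dimensional Hilbert space, the degree of uniform autocorrelation κ_u(P:P) = (1/d)∑_x Tr(P_x²) and the degree of autotuning κ_u*(P‖P) satisfy κ_u*(P‖P) ≥ κ_u(P:P) ≥ 2κ_u*(P‖P) − 1. -/

import Mathlib

/-!
The identity is a fuzzifying operation, so `κ_u(P:P)` is one of the values whose supremum is
`κ_u*(P‖P)`. Conversely, every POVM `Q` obtained from `P` by a fuzzifying operation satisfies
`2 Tr(Qₓ Pₓ) ≤ Tr Qₓ + Tr Pₓ²`, which is `Tr(Qₓ (1 - Pₓ)²) ≥ 0` plus `Tr((1 - Qₓ) Pₓ²) ≥ 0`;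
summing over `x` (with `∑ₓ Tr Qₓ = d`) and dividing by `d` gives `2 κ_u(Q:P) ≤ 1 + κ_u(P:P)`.
-/

open Matrix Finset
open scoped ComplexOrder

def IsPOVM {X : Type*} [Fintype X] {n : ℕ} (P : X → Matrix (Fin n) (Fin n) ℂ) : Prop :=
  (∀ x, (P x).PosSemidef) ∧ ∑ x, P x = 1

def IsCPMap {a b : ℕ} (Φ : Matrix (Fin a) (Fin a) ℂ →ₗ[ℂ] Matrix (Fin b) (Fin b) ℂ) : Prop :=
  ∃ (k : ℕ) (K : Fin k → Matrix (Fin b) (Fin a) ℂ), ∀ M, Φ M = ∑ i, K i * M * (K i)ᴴ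

/-- `Sharper P Q` : there is a fuzzifying operation (CP unital preprocessing mixed
with a trivial POVM) transforming the POVM `P` into the POVM `Q`. -/
def Sharper {X : Type*} [Fintype X] {a b : ℕ}
    (P : X → Matrix (Fin a) (Fin a) ℂ) (Q : X → Matrix (Fin b) (Fin b) ℂ) : Prop :=
  ∃ (E : Matrix (Fin a) (Fin a) ℂ →ₗ[ℂ] Matrix (Fin b) (Fin b) ℂ) (μ : ℝ) (p : X → ℝ),
    IsCPMap E ∧ E 1 = 1 ∧ 0 ≤ μ ∧ μ ≤ 1 ∧ (∀ x, 0 ≤ p x) ∧ ∑ x, p x = 1 ∧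
    ∀ x, Q x = (μ : ℂ) • E (P x) + ((1 - μ : ℝ) : ℂ) • ((p x : ℂ) • 1)
noncomputable def tuningSet {X : Type*} [Fintype X] {a r : ℕ}
    (P : X → Matrix (Fin a) (Fin a) ℂ) (Z : X → Matrix (Fin r) (Fin r) ℂ) : Set ℝ :=
  {v | ∃ Q : X → Matrix (Fin r) (Fin r) ℂ, Sharper P Q ∧
        v = (1 / (r : ℝ)) * ∑ x, (Q x * Z x).trace.re}

/-- The tuning degree κ_u*(P‖Z): the supremum of the uniform correlation with the
reference Z achievable from P via fuzzifying operations. -/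
noncomputable def tuningDegree {X : Type*} [Fintype X] {a r : ℕ}
    (P : X → Matrix (Fin a) (Fin a) ℂ) (Z : X → Matrix (Fin r) (Fin r) ℂ) : ℝ :=
  sSup (tuningSet P Z)

section TraceInequalities

variable {n 𝕜 : Type*} [Fintype n] [RCLike 𝕜]

open RCLike

lemma Matrix.PosSemidef.re_trace_mul_conjTranspose_mul_self_nonneg {A : Matrix n n 𝕜}
    (hA : A.PosSemidef) (C : Matrix n n 𝕜) : 0 ≤ re (A * (Cᴴ * C)).trace := by
  have hcycle : (A * (Cᴴ * C)).trace = (C * A * Cᴴ).trace := by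
    rw [← mul_assoc, trace_mul_cycle]
  rw [hcycle]
  exact (RCLike.nonneg_iff.mp (hA.mul_mul_conjTranspose_same C).trace_nonneg).1

lemma two_mul_re_trace_mul_le [DecidableEq n] {Q P : Matrix n n 𝕜} (hQ : Q.PosSemidef)
    (hQ_le_one : (1 - Q).PosSemidef) (hP : P.IsHermitian) :
    2 * re (Q * P).trace ≤ re Q.trace + re (P * P).trace := by
  have h₁ := hQ.re_trace_mul_conjTranspose_mul_self_nonneg (1 - P)
  have h₂ := hQ_le_one.re_trace_mul_conjTranspose_mul_self_nonneg P
  rw [conjTranspose_sub, conjTranspose_one, hP.eq] at h₁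
  rw [hP.eq] at h₂
  simp only [mul_sub, sub_mul, mul_one, one_mul, trace_sub, map_sub, ← mul_assoc] at h₁ h₂
  linarith

end TraceInequalities

lemma IsCPMap.map_posSemidef {a b : ℕ}
    {Φ : Matrix (Fin a) (Fin a) ℂ →ₗ[ℂ] Matrix (Fin b) (Fin b) ℂ} (hΦ : IsCPMap Φ)
    {M : Matrix (Fin a) (Fin a) ℂ} (hM : M.PosSemidef) : (Φ M).PosSemidef := by
  obtain ⟨k, K, hK⟩ := hΦ
  rw [hK]
  exact posSemidef_sum _ fun i _ ↦ hM.mul_mul_conjTranspose_same (K i)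

lemma isCPMap_id {a : ℕ} : IsCPMap (LinearMap.id : Matrix (Fin a) (Fin a) ℂ →ₗ[ℂ] _) :=
  ⟨1, fun _ ↦ 1, by simp⟩

namespace IsPOVM

variable {X : Type*} [Fintype X] {n : ℕ} {P Q : X → Matrix (Fin n) (Fin n) ℂ}

lemma one_sub_posSemidef (hP : IsPOVM P) (x : X) : (1 - P x).PosSemidef := by
  classical
  rw [← hP.2, ← Finset.sum_erase_eq_sub (Finset.mem_univ x)]
  exact posSemidef_sum _ fun y _ ↦ hP.1 y

lemma sum_re_trace (hP : IsPOVM P) : ∑ x, (P x).trace.re = n := by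
  rw [← Complex.re_sum, ← trace_sum, hP.2, trace_one]
  simp

lemma two_mul_sum_re_trace_mul_le (hQ : IsPOVM Q) (hP : ∀ x, (P x).IsHermitian) :
    2 * ∑ x, (Q x * P x).trace.re ≤ n + ∑ x, (P x * P x).trace.re := by
  rw [← hQ.sum_re_trace, ← Finset.sum_add_distrib, Finset.mul_sum]
  exact Finset.sum_le_sum fun x _ ↦
    two_mul_re_trace_mul_le (hQ.1 x) (hQ.one_sub_posSemidef x) (hP x)

end IsPOVM

section Sharper

variable {X : Type*} [Fintype X] {a b : ℕ}

lemma Sharper.isPOVM {P : X → Matrix (Fin a) (Fin a) ℂ} {Q : X → Matrix (Fin b) (Fin b) ℂ}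
    (h : Sharper P Q) (hP : IsPOVM P) : IsPOVM Q := by
  obtain ⟨E, μ, p, hE, hE1, hμ0, hμ1, hp0, hp1, hQ⟩ := h
  have hc : ∀ {t : ℝ}, 0 ≤ t → (0 : ℂ) ≤ t := fun ht ↦ Complex.zero_le_real.mpr ht
  refine ⟨fun x ↦ ?_, ?_⟩
  · rw [hQ x]
    exact ((hE.map_posSemidef (hP.1 x)).smul (hc hμ0)).add
      ((PosSemidef.one.smul (hc (hp0 x))).smul (hc (sub_nonneg.mpr hμ1)))
  · have hp1' : ∑ x, (p x : ℂ) = 1 := by exact_mod_cast hp1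
    simp only [hQ, Finset.sum_add_distrib, ← Finset.smul_sum, ← map_sum, hP.2, hE1,
      ← Finset.sum_smul, hp1', one_smul]
    push_cast
    module

lemma Sharper.refl [Nonempty X] (P : X → Matrix (Fin a) (Fin a) ℂ) : Sharper P P := by
  refine ⟨LinearMap.id, 1, fun _ ↦ 1 / Fintype.card X, isCPMap_id, rfl, zero_le_one, le_rfl,
    fun _ ↦ by positivity, ?_, fun x ↦ by simp⟩
  simp [Finset.card_univ]

end Sharper

/-- The paper's uniform correlation `κ_u(P:Z)`. -/
noncomputable def uniformCorrelation {X : Type*} [Fintype X] {r : ℕ}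
    (P Z : X → Matrix (Fin r) (Fin r) ℂ) : ℝ :=
  (1 / (r : ℝ)) * ∑ x, (P x * Z x).trace.re

section Tuning

variable {X : Type*} [Fintype X] {a r : ℕ}

lemma uniformCorrelation_mem_tuningSet {P : X → Matrix (Fin a) (Fin a) ℂ}
    {Q Z : X → Matrix (Fin r) (Fin r) ℂ} (h : Sharper P Q) :
    uniformCorrelation Q Z ∈ tuningSet P Z :=
  ⟨Q, h, rfl⟩

lemma two_mul_uniformCorrelation_sub_one_le {P Q : X → Matrix (Fin r) (Fin r) ℂ}
    (hQ : IsPOVM Q) (hP : ∀ x, (P x).IsHermitian) :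
    2 * uniformCorrelation Q P - 1 ≤ uniformCorrelation P P := by
  have hbound := mul_le_mul_of_nonneg_left (hQ.two_mul_sum_re_trace_mul_le hP)
    (by positivity : (0 : ℝ) ≤ 1 / r)
  have hr : 1 / (r : ℝ) * r ≤ 1 := by
    rw [one_div_mul_eq_div]
    exact div_self_le_one _
  unfold uniformCorrelation
  linarith

lemma tuningSet_self_subset_Iic {P : X → Matrix (Fin r) (Fin r) ℂ} (hP : IsPOVM P) :
    tuningSet P P ⊆ Set.Iic ((1 + uniformCorrelation P P) / 2) := by
  rintro _ ⟨Q, hPQ, rfl⟩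
  show uniformCorrelation Q P ≤ _
  have := two_mul_uniformCorrelation_sub_one_le (hPQ.isPOVM hP) fun x ↦ (hP.1 x).isHermitian
  linarith

end Tuning

theorem pretty_good_autotuning_general {X : Type*} [Fintype X] [Nonempty X] {d : ℕ}
    (P : X → Matrix (Fin d) (Fin d) ℂ) (hP : IsPOVM P) :
    (1 / (d : ℝ)) * ∑ x, (P x * P x).trace.re ≤ tuningDegree P P ∧
    2 * tuningDegree P P - 1 ≤ (1 / (d : ℝ)) * ∑ x, (P x * P x).trace.re := by
  have hmem : uniformCorrelation P P ∈ tuningSet P P :=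
    uniformCorrelation_mem_tuningSet (Sharper.refl P)
  have hsub := tuningSet_self_subset_Iic hP
  have hle : tuningDegree P P ≤ (1 + uniformCorrelation P P) / 2 := csSup_le ⟨_, hmem⟩ hsub
  exact ⟨le_csSup ⟨_, hsub⟩ hmem, by unfold uniformCorrelation at hle; linarith⟩

/-- Pretty-good estimate: the uniform autocorrelation κ_u(P:P) sandwiches the
degree of autotuning κ_u*(P‖P): κ_u*(P‖P) ≥ κ_u(P:P) ≥ 2 κ_u*(P‖P) − 1. -/
theorem pretty_good_autotuning {X : Type*} [Fintype X] [Nonempty X] {d : ℕ}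
    (hd : 0 < d) (P : X → Matrix (Fin d) (Fin d) ℂ) (hP : IsPOVM P) :
    (1 / (d : ℝ)) * ∑ x, (P x * P x).trace.re ≤ tuningDegree P P ∧
    2 * tuningDegree P P - 1 ≤ (1 / (d : ℝ)) * ∑ x, (P x * P x).trace.re :=
  pretty_good_autotuning_general P hP
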